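/- Let p be a polynomial of degree at most n with |p(z)| ≤ M for all |z| = 1, and let a ∈ ℂ with |a| ≤ 1. Then for all z with |z| ≥ 1, |(1+az)p'(z) − n a p(z)| ≤ M · |(1+az)·n·z^{n−1} − n a z^n|, i.e., |S̃_a[p](z)| ≤ M|S̃_a[E_n](z)| where E_n(z) = z^n. -/

import Mathlib

/-!
Suppose `‖S̃_a[p](z)‖ > M ‖S̃_a[Eₙ](z)‖` for some `‖z‖ ≥ 1` and put `c = S̃_a[p](z) / S̃_a[Eₙ](z)`,
so `‖c‖ > M`. Since `‖p(ζ)‖ ≤ M ‖ζ‖ⁿ` outside the unit disc (maximum modulus for the reversed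
polynomial), `q = p - c Eₙ` has degree `n` and all its zeros in the open unit disc, while
`S̃_a[q](z) = 0`. But `S̃_a[q](z) = q(z) ∑ (1 + aρ) / (z - ρ)` over the zeros `ρ` of `q`, and for
`‖ρ‖ < 1 ≤ ‖z‖`, `‖a‖ ≤ 1` every summand has positive real part after multiplication by `z + conj a`
(the case `az = -1` is immediate: then `S̃_a[q](z) = -n a q(z)`).
-/

open Polynomial Metric Set

noncomputable def maxSphere (P : Polynomial ℂ) : ℝ :=
  sSup ((fun w => ‖P.eval w‖) '' sphere (0:ℂ) 1)

noncomputable def minSphere (P : Polynomial ℂ) : ℝ :=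
  sInf ((fun w => ‖P.eval w‖) '' sphere (0:ℂ) 1)

open ComplexConjugate

namespace Polynomial

variable {p : ℂ[X]} {n : ℕ} {M : ℝ}

theorem norm_eval_le_of_norm_le_one (hM : ∀ w : ℂ, ‖w‖ = 1 → ‖p.eval w‖ ≤ M) {u : ℂ}
    (hu : ‖u‖ ≤ 1) : ‖p.eval u‖ ≤ M := by
  refine Complex.norm_le_of_forall_mem_frontier_norm_le (isBounded_ball (x := 0) (r := 1))
    p.differentiable.diffContOnCl (fun z hz => hM z ?_) ?_
  · simpa [frontier_ball (0 : ℂ) one_ne_zero] using hz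
  · simpa [closure_ball (0 : ℂ) one_ne_zero] using hu

theorem eval_eq_eval_reflect_inv_mul_pow (hp : p.natDegree ≤ n) {z : ℂ} (hz : z ≠ 0) :
    p.eval z = (p.reflect n).eval z⁻¹ * z ^ n := by
  have := invertibleOfNonzero hz
  simpa using (eval₂_reflect_mul_pow (RingHom.id ℂ) z n p hp).symm

theorem norm_eval_reflect_le (hp : p.natDegree ≤ n) (hM : ∀ w : ℂ, ‖w‖ = 1 → ‖p.eval w‖ ≤ M)
    {u : ℂ} (hu : ‖u‖ ≤ 1) : ‖(p.reflect n).eval u‖ ≤ M := by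
  refine norm_eval_le_of_norm_le_one (fun w hw => ?_) hu
  have hw₀ : w ≠ 0 := norm_ne_zero_iff.mp (by rw [hw]; exact one_ne_zero)
  have := hM w⁻¹ (by rw [norm_inv, hw, inv_one])
  rwa [eval_eq_eval_reflect_inv_mul_pow hp (inv_ne_zero hw₀), inv_inv, norm_mul, norm_pow,
    norm_inv, hw, inv_one, one_pow, mul_one] at this

theorem norm_coeff_le_of_norm_eval_le (hp : p.natDegree ≤ n)
    (hM : ∀ w : ℂ, ‖w‖ = 1 → ‖p.eval w‖ ≤ M) : ‖p.coeff n‖ ≤ M := by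
  have := norm_eval_reflect_le hp hM (u := 0) (by simp)
  rwa [← coeff_zero_eq_eval_zero, coeff_reflect, revAt_zero] at this

theorem norm_eval_le_mul_norm_pow (hp : p.natDegree ≤ n)
    (hM : ∀ w : ℂ, ‖w‖ = 1 → ‖p.eval w‖ ≤ M) {z : ℂ} (hz : 1 ≤ ‖z‖) :
    ‖p.eval z‖ ≤ M * ‖z‖ ^ n := by
  have hz₀ : z ≠ 0 := norm_pos_iff.mp (one_pos.trans_le hz)
  rw [eval_eq_eval_reflect_inv_mul_pow hp hz₀, norm_mul, norm_pow]
  gcongr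
  exact norm_eval_reflect_le hp hM (by rw [norm_inv]; exact inv_le_one_of_one_le₀ hz)

theorem natDegree_sub_C_mul_X_pow_of_norm_lt (hp : p.natDegree ≤ n)
    (hM : ∀ w : ℂ, ‖w‖ = 1 → ‖p.eval w‖ ≤ M) {c : ℂ} (hc : M < ‖c‖) :
    (p - C c * X ^ n).natDegree = n := by
  have hle := natDegree_sub_le_of_le hp (natDegree_C_mul_X_pow_le c n)
  refine le_antisymm (hle.trans_eq (max_self n)) (le_natDegree_of_ne_zero fun h => ?_)
  rw [coeff_sub, coeff_C_mul_X_pow, if_pos rfl, sub_eq_zero] at h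
  exact (norm_coeff_le_of_norm_eval_le hp hM).not_gt (h ▸ hc)

theorem norm_lt_one_of_mem_roots_sub_C_mul_X_pow (hp : p.natDegree ≤ n)
    (hM : ∀ w : ℂ, ‖w‖ = 1 → ‖p.eval w‖ ≤ M) {c : ℂ} (hc : M < ‖c‖) {ρ : ℂ}
    (hρ : ρ ∈ (p - C c * X ^ n).roots) : ‖ρ‖ < 1 := by
  by_contra! hρ₁
  have hroot : p.eval ρ = c * ρ ^ n := by
    simpa [sub_eq_zero] using (mem_roots'.mp hρ).2
  have := norm_eval_le_mul_norm_pow hp hM hρ₁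
  rw [hroot, norm_mul, norm_pow] at this
  have : 0 < ‖ρ‖ ^ n := pow_pos (one_pos.trans_le hρ₁) n
  nlinarith

end Polynomial

/-- The operator `S̃_a` acting on polynomials of degree at most `n`. -/
noncomputable def smirnov (n : ℕ) (a : ℂ) (p : ℂ[X]) : ℂ[X] :=
  (1 + C a * X) * derivative p - C (n * a) * p

section smirnov

variable {n : ℕ} {a : ℂ}

theorem eval_smirnov (p : ℂ[X]) (z : ℂ) :
    (smirnov n a p).eval z = (1 + a * z) * (derivative p).eval z - n * a * p.eval z := by
  simp [smirnov]

theorem smirnov_sub (p q : ℂ[X]) : smirnov n a (p - q) = smirnov n a p - smirnov n a q := by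
  simp only [smirnov, derivative_sub]
  ring

theorem smirnov_C_mul (c : ℂ) (p : ℂ[X]) : smirnov n a (C c * p) = C c * smirnov n a p := by
  simp only [smirnov, derivative_C_mul]
  ring

theorem smirnov_add_mul (m k : ℕ) (p q : ℂ[X]) :
    smirnov (m + k) a (p * q) = smirnov m a p * q + p * smirnov k a q := by
  simp only [smirnov, derivative_mul, Nat.cast_add, add_mul, C_add]
  ring

theorem smirnov_X_sub_C (ρ : ℂ) : smirnov 1 a (X - C ρ) = C (1 + a * ρ) := by
  simp only [smirnov, derivative_sub, derivative_X, derivative_C, Nat.cast_one, one_mul, C_add,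
    C_mul, C_1]
  ring

theorem eval_smirnov_X_pow (z : ℂ) : (smirnov n a (X ^ n)).eval z = n * z ^ (n - 1) := by
  rcases n with _ | n
  · simp [eval_smirnov]
  · rw [eval_smirnov, derivative_X_pow]
    simp only [eval_mul, eval_C, eval_pow, eval_X, add_tsub_cancel_right]
    ring

theorem eval_smirnov_multiset_prod_X_sub_C {t : Multiset ℂ} {z : ℂ} (hz : z ∉ t) :
    (smirnov (Multiset.card t) a (t.map (X - C ·)).prod).eval z =
      (t.map (X - C ·)).prod.eval z * (t.map fun ρ => (1 + a * ρ) / (z - ρ)).sum := by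
  induction t using Multiset.induction_on with
  | empty => simp [smirnov]
  | cons ρ t ih =>
    have hzρ : z - ρ ≠ 0 := sub_ne_zero.mpr fun h => hz (h ▸ Multiset.mem_cons_self _ _)
    rw [Multiset.map_cons, Multiset.prod_cons, Multiset.card_cons, add_comm, smirnov_add_mul,
      smirnov_X_sub_C, eval_add, eval_mul, eval_mul, ih (fun h => hz (Multiset.mem_cons_of_mem h))]
    simp only [eval_mul, eval_C, eval_sub, eval_X, Multiset.map_cons, Multiset.sum_cons]
    field_simp

end smirnov

theorem re_add_conj_mul_div_sub_pos {a z ρ : ℂ} (ha : ‖a‖ ≤ 1) (hz : 1 ≤ ‖z‖) (hρ : ‖ρ‖ < 1)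
    (haz : a * z ≠ -1) : 0 < ((z + conj a) * ((1 + a * ρ) / (z - ρ))).re := by
  have hzρ : z - ρ ≠ 0 := sub_ne_zero.mpr fun h => by rw [h] at hz; linarith
  suffices h : 0 < ((z + conj a) * (1 + a * ρ) * conj (z - ρ)).re by
    rw [← mul_div_assoc, ← mul_div_mul_right _ _ ((_root_.map_ne_zero conj).mpr hzρ),
      Complex.mul_conj, Complex.div_ofReal_re]
    exact div_pos h (Complex.normSq_pos.mpr hzρ)
  have expand : ((z + conj a) * (1 + a * ρ) * conj (z - ρ)).re =
      (‖z‖ ^ 2 - ‖a‖ ^ 2 * ‖ρ‖ ^ 2) - (1 - ‖a‖ ^ 2) * (z * conj ρ).re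
        + (‖z‖ ^ 2 - 1) * (a * ρ).re + (1 - ‖ρ‖ ^ 2) * (a * z).re := by
    simp only [Complex.sq_norm, Complex.normSq_apply, Complex.mul_re, Complex.mul_im,
      Complex.add_re, Complex.add_im, Complex.sub_re, Complex.sub_im, Complex.conj_re,
      Complex.conj_im, Complex.one_re, Complex.one_im]
    ring
  have hzρ' : (z * conj ρ).re ≤ ‖z‖ * ‖ρ‖ := by
    simpa using Complex.re_le_norm (z * conj ρ)
  have haρ : -(‖a‖ * ‖ρ‖) ≤ (a * ρ).re :=
    (abs_le.mp ((Complex.abs_re_le_norm _).trans (norm_mul a ρ).le)).1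
  have haz' : -(‖a‖ * ‖z‖) ≤ (a * z).re :=
    (abs_le.mp ((Complex.abs_re_le_norm _).trans (norm_mul a z).le)).1
  have ha₀ := norm_nonneg a
  have hρ₀ := norm_nonneg ρ
  rw [expand]
  rcases (ha.trans hz).lt_or_eq with hlt | heq
  · -- the lower bound obtained from the three estimates factors as this product
    have hprod : 0 < (‖z‖ - ‖a‖) * (1 - ‖a‖ * ‖ρ‖) * (‖z‖ - ‖ρ‖) :=
      mul_pos (mul_pos (by linarith) (by nlinarith)) (by linarith)
    nlinarith [mul_le_mul_of_nonneg_left hzρ' (by nlinarith : (0:ℝ) ≤ 1 - ‖a‖ ^ 2),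
      mul_le_mul_of_nonneg_left haρ (by nlinarith : (0:ℝ) ≤ ‖z‖ ^ 2 - 1),
      mul_le_mul_of_nonneg_left haz' (by nlinarith : (0:ℝ) ≤ 1 - ‖ρ‖ ^ 2)]
  · -- now the expression is `(1 - ‖ρ‖²) (1 + re (a z))`, and `2 (1 + re (a z)) = ‖1 + a z‖²`
    have ha1 : ‖a‖ = 1 := le_antisymm ha (heq ▸ hz)
    have hz1 : ‖z‖ = 1 := heq ▸ ha1
    have h1az : 0 < Complex.normSq (1 + a * z) :=
      Complex.normSq_pos.mpr fun h => haz (by linear_combination h)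
    rw [Complex.normSq_add, map_one, one_mul, Complex.conj_re, Complex.normSq_mul,
      ← Complex.sq_norm, ← Complex.sq_norm, ha1, hz1] at h1az
    have : 0 < (1 - ‖ρ‖ ^ 2) * (1 + (a * z).re) :=
      mul_pos (by nlinarith) (by linarith)
    rw [ha1, hz1]
    linarith

theorem eval_smirnov_eq_eval_mul_sum (a : ℂ) {s : ℂ[X]} {z : ℂ} (hz : z ∉ s.roots) :
    (smirnov s.natDegree a s).eval z =
      s.eval z * (s.roots.map fun ρ => (1 + a * ρ) / (z - ρ)).sum := by
  have hfac :=
    C_leadingCoeff_mul_prod_multiset_X_sub_C (IsAlgClosed.card_roots_eq_natDegree (p := s))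
  have hS : smirnov s.natDegree a s =
      C s.leadingCoeff * smirnov (Multiset.card s.roots) a (s.roots.map (X - C ·)).prod := by
    rw [← smirnov_C_mul, hfac, IsAlgClosed.card_roots_eq_natDegree]
  rw [hS, eval_C_mul, eval_smirnov_multiset_prod_X_sub_C hz, ← mul_assoc, ← eval_C_mul, hfac]

theorem eval_smirnov_ne_zero {a : ℂ} {s : ℂ[X]} (hn : 0 < s.natDegree)
    (hroots : ∀ ρ ∈ s.roots, ‖ρ‖ < 1) (ha : ‖a‖ ≤ 1) {z : ℂ} (hz : 1 ≤ ‖z‖) :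
    (smirnov s.natDegree a s).eval z ≠ 0 := by
  have hz_roots : z ∉ s.roots := fun h => (hroots z h).not_ge hz
  have hsz : s.eval z ≠ 0 := fun h =>
    hz_roots ((mem_roots (ne_zero_of_natDegree_gt hn)).mpr h)
  by_cases haz : a * z = -1
  · have ha₀ : a ≠ 0 := by rintro rfl; simp at haz
    rw [eval_smirnov, show 1 + a * z = 0 by linear_combination haz, zero_mul, zero_sub, neg_ne_zero]
    exact mul_ne_zero (mul_ne_zero (by exact_mod_cast hn.ne') ha₀) hsz
  rw [eval_smirnov_eq_eval_mul_sum a hz_roots]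
  refine mul_ne_zero hsz fun hsum => ?_
  have hne : s.roots ≠ ∅ := by
    rw [Multiset.empty_eq_zero, ← Multiset.card_pos, IsAlgClosed.card_roots_eq_natDegree]
    exact hn
  have hpos := Multiset.sum_lt_sum_of_nonempty hne (f := fun _ => (0 : ℝ))
    (g := fun ρ => ((z + conj a) * ((1 + a * ρ) / (z - ρ))).re)
    fun ρ hρ => re_add_conj_mul_div_sub_pos ha hz (hroots ρ hρ) haz
  simp only [Multiset.map_const', Multiset.sum_replicate, smul_zero] at hpos
  have hre : ((z + conj a) * (s.roots.map fun ρ => (1 + a * ρ) / (z - ρ)).sum).re =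
      (s.roots.map fun ρ => ((z + conj a) * ((1 + a * ρ) / (z - ρ))).re).sum := by
    rw [← Multiset.sum_map_mul_left, ← Complex.coe_reAddGroupHom, map_multiset_sum,
      Multiset.map_map]
    rfl
  rw [← hre, hsum, mul_zero, Complex.zero_re] at hpos
  exact hpos.false

theorem norm_eval_smirnov_le {n : ℕ} {p : ℂ[X]} {M : ℝ} (hp : p.natDegree ≤ n)
    (hM : ∀ w : ℂ, ‖w‖ = 1 → ‖p.eval w‖ ≤ M) {a : ℂ} (ha : ‖a‖ ≤ 1) {z : ℂ} (hz : 1 ≤ ‖z‖) :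
    ‖(smirnov n a p).eval z‖ ≤ M * ‖(smirnov n a (X ^ n)).eval z‖ := by
  rcases n.eq_zero_or_pos with rfl | hn
  · rw [eq_C_of_natDegree_le_zero hp]
    simp [smirnov]
  have hE : (smirnov n a (X ^ n)).eval z ≠ 0 := by
    rw [eval_smirnov_X_pow]
    exact mul_ne_zero (by exact_mod_cast hn.ne')
      (pow_ne_zero _ (norm_pos_iff.mp (one_pos.trans_le hz)))
  by_contra! h
  set c := (smirnov n a p).eval z / (smirnov n a (X ^ n)).eval z
  have hc : M < ‖c‖ := by
    rwa [norm_div, lt_div_iff₀ (norm_pos_iff.mpr hE)]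
  have hdeg := natDegree_sub_C_mul_X_pow_of_norm_lt hp hM hc
  refine eval_smirnov_ne_zero (by rwa [hdeg])
    (fun ρ => norm_lt_one_of_mem_roots_sub_C_mul_X_pow hp hM hc) ha hz ?_
  rw [hdeg, smirnov_sub, smirnov_C_mul, eval_sub, eval_C_mul, div_mul_cancel₀ _ hE, sub_self]

theorem stmt_10 (n : ℕ) (p : Polynomial ℂ) (hp : p.natDegree ≤ n)
    (M : ℝ) (hM : ∀ w : ℂ, ‖w‖ = 1 → ‖p.eval w‖ ≤ M)
    (a : ℂ) (ha : ‖a‖ ≤ 1) :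
    ∀ z : ℂ, 1 ≤ ‖z‖ →
      ‖(1 + a * z) * (derivative p).eval z - n * a * p.eval z‖ ≤
        M * ‖(1 + a * z) * n * z ^ (n - 1) - n * a * z ^ n‖ := by
  intro z hz
  simpa [eval_smirnov, derivative_X_pow, mul_assoc] using norm_eval_smirnov_le hp hM ha hz
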